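/- arXiv:0710.2509 — 2 statements merged into one kernel-verified Lean document; each statement's English description precedes it below -/
import Mathlib

section
/- Let (A, E) be an exact category and consider an admissible commutative square in A, i.e., a commutative square in which the two horizontal arrows are admissible monomorphisms and the two vertical arrows are admissible epimorphisms. Then this square is cartesian (a pullback) in A if and only if it is cocartesian (a pushout) in A. -/
/-!
In the abelian envelope, a commutative square with top arrow `m₁` mono and right arrow `e₂` epi
is a pullback iff `0 → a → b ⊞ c → d → 0` with maps `(m₁, e₁)` and `(e₂, -m₂)` is short exact,
and a pushout iff the same sequence with the sign moved onto `e₁` is; the two sequences are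
isomorphic, so the notions agree there. The envelope's pullback of an admissible epimorphism `e₂`
along `m₂` is an extension of `c` by `ker e₂`, hence lies in the extension-closed subcategory, so
a pullback square of the subcategory is one of the envelope; dually for the pushout of an
admissible monomorphism. The fully faithful inclusion reflects both properties back.
-/

open CategoryTheory Limits ZeroObject

universe v u

variable {F : Type u} [Category.{v} F] [Abelian F]

/-- A predicate of objects of an abelian category (a full subcategory) is closed under
extensions if for every short exact sequence `0 → x → y → z → 0` with `x`, `z` in the
subcategory, also `y` is in the subcategory. -/
def ClosedUnderExtensions (P : F → Prop) : Prop :=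
  ∀ ⦃x y z : F⦄ (f : x ⟶ y) (g : y ⟶ z) (w : f ≫ g = 0),
    (ShortComplex.mk f g w).ShortExact → P x → P z → P y

/-- A morphism of the exact category `A` (the full subcategory of the abelian envelope `F`
determined by `P`) is an admissible monomorphism if it is the first map of a short exact
sequence of `F` all of whose terms lie in `A`. -/
def AdmissibleMono (P : F → Prop) {x y : F} (f : x ⟶ y) : Prop :=
  P x ∧ P y ∧ ∃ (c : F) (q : y ⟶ c) (w : f ≫ q = 0), P c ∧ (ShortComplex.mk f q w).ShortExact

/-- A morphism of the exact category `A` is an admissible epimorphism if it is the second map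
of a short exact sequence of `F` all of whose terms lie in `A`. -/
def AdmissibleEpi (P : F → Prop) {x y : F} (f : x ⟶ y) : Prop :=
  P x ∧ P y ∧ ∃ (k : F) (ι : k ⟶ x) (w : ι ≫ f = 0), P k ∧ (ShortComplex.mk ι f w).ShortExact

namespace CategoryTheory

section ZeroMorphisms

variable {C : Type*} [Category* C] [HasZeroMorphisms C] {X₁ X₂ X₃ X₄ : C}

noncomputable def IsPullback.isLimitKernelForkLift {fst : X₁ ⟶ X₂} {snd : X₁ ⟶ X₃}
    {f : X₂ ⟶ X₄} {g : X₃ ⟶ X₄} (h : IsPullback fst snd f g) {K : C} {ι : K ⟶ X₂}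
    {w : ι ≫ f = 0} (hι : IsLimit (KernelFork.ofι ι w)) :
    IsLimit (KernelFork.ofι (h.lift ι 0 (by simp [w])) (h.lift_snd _ _ _)) :=
  have lift {T : C} (t : T ⟶ X₁) (ht : t ≫ snd = 0) :=
    KernelFork.IsLimit.lift' hι (t ≫ fst) (by rw [Category.assoc, h.w, reassoc_of% ht, zero_comp])
  KernelFork.IsLimit.ofι _ _ (fun t ht => (lift t ht).1)
    (fun t ht => h.hom_ext (by simpa using (lift t ht).2) (by simp [ht]))
    (fun t ht m hm => Fork.IsLimit.hom_ext hι (by simpa [← hm] using (lift t ht).2.symm))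

noncomputable def IsPushout.isColimitCokernelCoforkDesc {f : X₁ ⟶ X₂} {g : X₁ ⟶ X₃}
    {inl : X₂ ⟶ X₄} {inr : X₃ ⟶ X₄} (h : IsPushout f g inl inr) {Q : C} {π : X₂ ⟶ Q}
    {w : f ≫ π = 0} (hπ : IsColimit (CokernelCofork.ofπ π w)) :
    IsColimit (CokernelCofork.ofπ (h.desc π 0 (by simp [w])) (h.inr_desc _ _ _)) :=
  have desc {T : C} (t : X₄ ⟶ T) (ht : inr ≫ t = 0) :=
    CokernelCofork.IsColimit.desc' hπ (inl ≫ t) (by rw [h.w_assoc, ht, comp_zero])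
  CokernelCofork.IsColimit.ofπ _ _ (fun t ht => (desc t ht).1)
    (fun t ht => h.hom_ext (by simpa using (desc t ht).2) (by simp [ht]))
    (fun t ht m hm => Cofork.IsColimit.hom_ext hπ (by simpa [← hm] using (desc t ht).2.symm))

end ZeroMorphisms

section Preadditive

variable {C : Type*} [Category* C] [Preadditive C] {X₁ X₂ X₃ X₄ : C}
  {t : X₁ ⟶ X₂} {l : X₁ ⟶ X₃} {r : X₂ ⟶ X₄} {b : X₃ ⟶ X₄}

/-- Negating the `X₃`-component of `X₂ ⊞ X₃` moves the sign from `b` to `l`. -/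
noncomputable def CommSq.shortComplex'IsoShortComplex [HasBinaryBiproduct X₂ X₃]
    (sq : CommSq t l r b) : sq.shortComplex' ≅ sq.shortComplex :=
  ShortComplex.isoMk (Iso.refl X₁)
    (show X₂ ⊞ X₃ ≅ X₂ ⊞ X₃ from
      { hom := biprod.map (𝟙 X₂) (-𝟙 X₃)
        inv := biprod.map (𝟙 X₂) (-𝟙 X₃) })
    (Iso.refl X₄) (by unfold CommSq.shortComplex' CommSq.shortComplex; ext <;> simp)
    (by unfold CommSq.shortComplex' CommSq.shortComplex; ext <;> simp)

end Preadditive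

section Abelian

variable {C : Type*} [Category* C] [Abelian C] {X₁ X₂ X₃ X₄ : C}
  {t : X₁ ⟶ X₂} {l : X₁ ⟶ X₃} {r : X₂ ⟶ X₄} {b : X₃ ⟶ X₄}

lemma CommSq.isPullback_iff_exact_shortComplex' (sq : CommSq t l r b) [Mono t] :
    IsPullback t l r b ↔ sq.shortComplex'.Exact := by
  refine ⟨IsPullback.exact_shortComplex', fun h => ?_⟩
  have : Mono sq.shortComplex'.f :=
    (mono_of_mono_fac (biprod.lift_fst t l) : Mono (biprod.lift t l))
  exact IsPullback.of_isLimit (sq.isLimitEquivIsLimitKernelFork.symm h.fIsKernel)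

lemma CommSq.isPushout_iff_exact_shortComplex (sq : CommSq t l r b) [Epi r] :
    IsPushout t l r b ↔ sq.shortComplex.Exact := by
  refine ⟨IsPushout.exact_shortComplex, fun h => ?_⟩
  have : Epi sq.shortComplex.g :=
    (epi_of_epi_fac (biprod.inl_desc r b) : Epi (biprod.desc r b))
  exact IsPushout.of_isColimit (sq.isColimitEquivIsColimitCokernelCofork.symm h.gIsCokernel)

lemma CommSq.isPullback_iff_isPushout (sq : CommSq t l r b) [Mono t] [Epi r] :
    IsPullback t l r b ↔ IsPushout t l r b :=
  calc IsPullback t l r b ↔ sq.shortComplex'.Exact := sq.isPullback_iff_exact_shortComplex'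
    _ ↔ sq.shortComplex.Exact := ShortComplex.exact_iff_of_iso sq.shortComplex'IsoShortComplex
    _ ↔ IsPushout t l r b := sq.isPushout_iff_exact_shortComplex.symm

end Abelian

section FullSubcategory

variable {C : Type*} [Category* C] {P : ObjectProperty C} {X₁ X₂ X₃ X₄ : P.FullSubcategory}

lemma IsPullback.map_ι {fst : X₁ ⟶ X₂} {snd : X₁ ⟶ X₃} {f : X₂ ⟶ X₄} {g : X₃ ⟶ X₄}
    (h : IsPullback fst snd f g) [HasPullback (P.ι.map f) (P.ι.map g)]
    (hP : P (pullback (P.ι.map f) (P.ι.map g))) :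
    IsPullback (P.ι.map fst) (P.ι.map snd) (P.ι.map f) (P.ι.map g) := by
  have h' : IsPullback (P := ⟨_, hP⟩) (ObjectProperty.homMk (pullback.fst _ _))
      (ObjectProperty.homMk (pullback.snd _ _)) f g :=
    .of_map P.ι (InducedCategory.hom_ext pullback.condition) (.of_hasPullback _ _)
  exact .of_iso_pullback (h.toCommSq.map P.ι) (P.ι.mapIso (h.isoIsPullback _ _ h'))
    (congrArg (·.hom) (h.isoIsPullback_hom_fst _ _ h'))
    (congrArg (·.hom) (h.isoIsPullback_hom_snd _ _ h'))

lemma IsPushout.map_ι {f : X₁ ⟶ X₂} {g : X₁ ⟶ X₃} {inl : X₂ ⟶ X₄} {inr : X₃ ⟶ X₄}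
    (h : IsPushout f g inl inr) [HasPushout (P.ι.map f) (P.ι.map g)]
    (hP : P (pushout (P.ι.map f) (P.ι.map g))) :
    IsPushout (P.ι.map f) (P.ι.map g) (P.ι.map inl) (P.ι.map inr) := by
  have h' : IsPushout (P := ⟨_, hP⟩) f g (ObjectProperty.homMk (pushout.inl _ _))
      (ObjectProperty.homMk (pushout.inr _ _)) :=
    .of_map P.ι (InducedCategory.hom_ext (pushout.condition (f := P.ι.map f) (g := P.ι.map g)))
      (.of_hasPushout _ _)
  exact .of_iso_pushout (h.toCommSq.map P.ι) (P.ι.mapIso (h.isoIsPushout _ _ h'))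
    (congrArg (·.hom) (h.inl_isoIsPushout_hom _ _ h'))
    (congrArg (·.hom) (h.inr_isoIsPushout_hom _ _ h'))

end FullSubcategory

end CategoryTheory

lemma AdmissibleMono.mono {P : F → Prop} {x y : F} {f : x ⟶ y} (hf : AdmissibleMono P f) :
    Mono f := by
  obtain ⟨-, -, _, _, _, -, hse⟩ := hf
  exact hse.mono_f

lemma AdmissibleEpi.epi {P : F → Prop} {x y : F} {f : x ⟶ y} (hf : AdmissibleEpi P f) :
    Epi f := by
  obtain ⟨-, -, _, _, _, -, hse⟩ := hf
  exact hse.epi_g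

lemma ClosedUnderExtensions.prop_pullback {P : F → Prop} (hP : ClosedUnderExtensions P)
    {b c d : F} {e : b ⟶ d} (he : AdmissibleEpi P e) (m : c ⟶ d) (hc : P c) :
    P (pullback e m) := by
  obtain ⟨-, -, k, ι, w, hk, hι⟩ := he
  have := hι.mono_f
  have := hι.epi_g
  have sq := IsPullback.of_hasPullback e m
  have hw : ι ≫ e = 0 ≫ m := by simp [w]
  have : Mono (sq.lift ι 0 hw) := mono_of_mono_fac (sq.lift_fst _ _ _)
  exact hP _ _ _ (.mk' ((ShortComplex.mk _ _ (sq.lift_snd ι 0 hw)).exact_of_f_is_kernel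
    (sq.isLimitKernelForkLift hι.fIsKernel)) inferInstance inferInstance) hk hc

lemma ClosedUnderExtensions.prop_pushout {P : F → Prop} (hP : ClosedUnderExtensions P)
    {a b c : F} {m : a ⟶ b} (hm : AdmissibleMono P m) (e : a ⟶ c) (hc : P c) :
    P (pushout m e) := by
  obtain ⟨-, -, q, π, w, hq, hπ⟩ := hm
  have := hπ.mono_f
  have := hπ.epi_g
  have sq := IsPushout.of_hasPushout m e
  have hw : m ≫ π = e ≫ 0 := by simp [w]
  have : Epi (sq.desc π 0 hw) := epi_of_epi_fac (sq.inl_desc _ _ _)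
  exact hP _ _ _ (.mk' ((ShortComplex.mk _ _ (sq.inr_desc π 0 hw)).exact_of_g_is_cokernel
    (sq.isColimitCokernelCoforkDesc hπ.gIsCokernel)) inferInstance inferInstance) hc hq

theorem admissible_square_isPullback_iff_isPushout_general
    (P : F → Prop) (hP : ClosedUnderExtensions P)
    {a b c d : F} (ha : P a) (hb : P b) (hc : P c) (hd : P d)
    (m₁ : a ⟶ b) (m₂ : c ⟶ d) (e₁ : a ⟶ c) (e₂ : b ⟶ d)
    (hm₁ : AdmissibleMono P m₁)
    (he₂ : AdmissibleEpi P e₂)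
    (comm : m₁ ≫ e₂ = e₁ ≫ m₂) :
    IsPullback (C := ObjectProperty.FullSubcategory P) (P := ⟨a, ha⟩) (X := ⟨b, hb⟩) (Y := ⟨c, hc⟩)
        (Z := ⟨d, hd⟩) (ObjectProperty.homMk m₁) (ObjectProperty.homMk e₁)
        (ObjectProperty.homMk e₂) (ObjectProperty.homMk m₂) ↔
      IsPushout (C := ObjectProperty.FullSubcategory P) (Z := ⟨a, ha⟩) (X := ⟨b, hb⟩) (Y := ⟨c, hc⟩)
        (P := ⟨d, hd⟩) (ObjectProperty.homMk m₁) (ObjectProperty.homMk e₁)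
        (ObjectProperty.homMk e₂) (ObjectProperty.homMk m₂) := by
  have := hm₁.mono
  have := he₂.epi
  have sq : CommSq m₁ e₁ e₂ m₂ := ⟨comm⟩
  constructor
  · intro h
    have hF : IsPullback m₁ e₁ e₂ m₂ := h.map_ι (hP.prop_pullback he₂ m₂ hc)
    exact .of_map (ObjectProperty.ι P) (InducedCategory.hom_ext comm)
      (sq.isPullback_iff_isPushout.1 hF)
  · intro h
    have hF : IsPushout m₁ e₁ e₂ m₂ := h.map_ι (hP.prop_pushout hm₁ e₁ hc)
    exact .of_map (ObjectProperty.ι P) (InducedCategory.hom_ext comm)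
      (sq.isPullback_iff_isPushout.2 hF)

/-- Let `(A, E)` be an exact category, presented via the Quillen embedding as
a full additive extension-closed subcategory (predicate `P`) of its abelian envelope `F`.
Consider an admissible commutative square of `A`: horizontal arrows `m₁ : a ⟶ b`, `m₂ : c ⟶ d`
admissible monomorphisms and vertical arrows `e₁ : a ⟶ c`, `e₂ : b ⟶ d` admissible
epimorphisms. Then the square is cartesian (a pullback) in `A` if and only if it is cocartesian
(a pushout) in `A`. -/
theorem admissible_square_isPullback_iff_isPushout
    (P : F → Prop) (hP : ClosedUnderExtensions P)
    (hzero : P 0) (hbiprod : ∀ x y : F, P x → P y → P (x ⊞ y))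
    {a b c d : F} (ha : P a) (hb : P b) (hc : P c) (hd : P d)
    (m₁ : a ⟶ b) (m₂ : c ⟶ d) (e₁ : a ⟶ c) (e₂ : b ⟶ d)
    (hm₁ : AdmissibleMono P m₁) (hm₂ : AdmissibleMono P m₂)
    (he₁ : AdmissibleEpi P e₁) (he₂ : AdmissibleEpi P e₂)
    (comm : m₁ ≫ e₂ = e₁ ≫ m₂) :
    IsPullback (C := ObjectProperty.FullSubcategory P) (P := ⟨a, ha⟩) (X := ⟨b, hb⟩) (Y := ⟨c, hc⟩)
        (Z := ⟨d, hd⟩) (ObjectProperty.homMk m₁) (ObjectProperty.homMk e₁)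
        (ObjectProperty.homMk e₂) (ObjectProperty.homMk m₂) ↔
      IsPushout (C := ObjectProperty.FullSubcategory P) (Z := ⟨a, ha⟩) (X := ⟨b, hb⟩) (Y := ⟨c, hc⟩)
        (P := ⟨d, hd⟩) (ObjectProperty.homMk m₁) (ObjectProperty.homMk e₁)
        (ObjectProperty.homMk e₂) (ObjectProperty.homMk m₂) :=
  admissible_square_isPullback_iff_isPushout_general P hP ha hb hc hd m₁ m₂ e₁ e₂ hm₁ he₂ comm
end

section
/- Let three admissible squares be given: (X', Y', T', Z') with monos m'₁ : X' → Y', m'₂ : T' → Z' and epis e'₂ : X' → T', e'₁ : Y' → Z'; (X, Y, T, Z) with m₁, m₂, e₂, e₁ analogously; and (X'', Y'', T'', Z'') with m''₁, m''₂, e''₂, e''₁. Suppose the first and third squares are cartesian, and suppose given admissible short exact sequences X' → X → X'', Y' → Y → Y'', T' → T → T'', Z' → Z → Z'' making the resulting cubic diagram commute. Then the middle square (X, Y, T, Z) is cartesian. -/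
open CategoryTheory Limits

/-
A commutative square `X → Y, T → Z` is cartesian iff `X ⟶ Y ⊞ T ⟶ Z` is left exact. The cube maps
the complex of the first square to that of the middle one, and that one to the complex of the third
square, and in each degree these maps form a short exact sequence (in the middle degree, the direct
sum of those of `Y` and `T`). A diagram chase, namely the exactness of the long homology sequence at
the middle complex, transfers injectivity of `X ⟶ Y ⊞ T` and exactness at `Y ⊞ T` from the two
outer complexes to the middle one.
-/

namespace CategoryTheory

open Category

section Preadditive

variable {C : Type*} [Category* C] [Preadditive C] [HasBinaryBiproducts C]
  {X₁ X₂ X₃ X₄ Y₁ Y₂ Y₃ Y₄ : C}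
  {fst : X₁ ⟶ X₂} {snd : X₁ ⟶ X₃} {f : X₂ ⟶ X₄} {g : X₃ ⟶ X₄}
  {fst' : Y₁ ⟶ Y₂} {snd' : Y₁ ⟶ Y₃} {f' : Y₂ ⟶ Y₄} {g' : Y₃ ⟶ Y₄}

@[simps]
noncomputable def CommSq.shortComplex'Map (sq : CommSq fst snd f g) (sq' : CommSq fst' snd' f' g')
    (τ₁ : X₁ ⟶ Y₁) (τ₂ : X₂ ⟶ Y₂) (τ₃ : X₃ ⟶ Y₃) (τ₄ : X₄ ⟶ Y₄)
    (h_fst : fst ≫ τ₂ = τ₁ ≫ fst') (h_snd : snd ≫ τ₃ = τ₁ ≫ snd')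
    (h_f : f ≫ τ₄ = τ₂ ≫ f') (h_g : g ≫ τ₄ = τ₃ ≫ g') :
    sq.shortComplex' ⟶ sq'.shortComplex' where
  τ₁ := τ₁
  τ₂ := biprod.map τ₂ τ₃
  τ₃ := τ₄
  comm₁₂ := by
    -- `simp` does not see through the projections of `CommSq.shortComplex'`
    change τ₁ ≫ biprod.lift fst' snd' = biprod.lift fst snd ≫ biprod.map τ₂ τ₃
    ext <;> simp [h_fst, h_snd]
  comm₂₃ := by
    change biprod.map τ₂ τ₃ ≫ biprod.desc f' (-g') = biprod.desc f (-g) ≫ τ₄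
    ext <;> simp [h_f, h_g]

end Preadditive

section Abelian

variable {C : Type*} [Category* C] [Abelian C]

theorem ShortComplex.exact_biprod_map {S₁ S₂ : ShortComplex C} (h₁ : S₁.Exact) (h₂ : S₂.Exact) :
    (ShortComplex.mk (biprod.map S₁.f S₂.f) (biprod.map S₁.g S₂.g) (by ext <;> simp)).Exact := by
  rw [ShortComplex.exact_iff_exact_up_to_refinements]
  intro A y hy
  have hy₁ : (y ≫ biprod.fst) ≫ S₁.g = 0 := by simpa using hy =≫ biprod.fst
  have hy₂ : y ≫ biprod.snd ≫ S₂.g = 0 := by simpa using hy =≫ biprod.snd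
  obtain ⟨A₁, π₁, _, x₁, hx₁⟩ := h₁.exact_up_to_refinements _ hy₁
  obtain ⟨A₂, π₂, _, x₂, hx₂⟩ := h₂.exact_up_to_refinements (π₁ ≫ y ≫ biprod.snd)
    (by rw [assoc, assoc, hy₂, comp_zero])
  refine ⟨A₂, π₂ ≫ π₁, inferInstance, biprod.lift (π₂ ≫ x₁) x₂, ?_⟩
  ext
  · simp [hx₁]
  · simpa using hx₂

theorem ShortComplex.mono_f_of_outer_rows_mono {S₁ S₂ S₃ : ShortComplex C}
    (φ : S₁ ⟶ S₂) (ψ : S₂ ⟶ S₃) {w : φ.τ₁ ≫ ψ.τ₁ = 0}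
    (hτ₁ : (ShortComplex.mk φ.τ₁ ψ.τ₁ w).Exact) [Mono φ.τ₂] [Mono S₁.f] [Mono S₃.f] :
    Mono S₂.f := by
  rw [Preadditive.mono_iff_cancel_zero]
  intro A x hx
  have hxψ : x ≫ ψ.τ₁ = 0 :=
    zero_of_comp_mono S₃.f (by rw [assoc, ψ.comm₁₂, reassoc_of% hx, zero_comp])
  obtain ⟨A₁, π, _, y, hy⟩ := hτ₁.exact_up_to_refinements x hxψ
  dsimp at y hy
  have hy₀ : y = 0 :=
    zero_of_comp_mono S₁.f <| zero_of_comp_mono φ.τ₂ <| by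
      rw [assoc, ← φ.comm₁₂, ← reassoc_of% hy, hx, comp_zero]
  exact zero_of_epi_comp π (by rw [hy, hy₀, zero_comp])

theorem ShortComplex.exact_of_outer_rows_exact {S₁ S₂ S₃ : ShortComplex C}
    (φ : S₁ ⟶ S₂) (ψ : S₂ ⟶ S₃) {w : φ.τ₂ ≫ ψ.τ₂ = 0}
    (hτ₂ : (ShortComplex.mk φ.τ₂ ψ.τ₂ w).Exact) [Epi ψ.τ₁] [Mono φ.τ₃]
    (h₁ : S₁.Exact) (h₃ : S₃.Exact) : S₂.Exact := by
  rw [ShortComplex.exact_iff_exact_up_to_refinements]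
  intro A s hs
  obtain ⟨A₁, π₁, _, x₃, hx₃⟩ := h₃.exact_up_to_refinements (s ≫ ψ.τ₂)
    (by rw [assoc, ψ.comm₂₃, reassoc_of% hs, zero_comp])
  obtain ⟨A₂, π₂, _, x, hx⟩ := surjective_up_to_refinements_of_epi ψ.τ₁ x₃
  obtain ⟨A₃, π₃, _, y, hy⟩ := hτ₂.exact_up_to_refinements (π₂ ≫ π₁ ≫ s - x ≫ S₂.f) (by
    simp only [Preadditive.sub_comp, assoc, ← ψ.comm₁₂]
    rw [hx₃, reassoc_of% hx, sub_self])
  dsimp at y hy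
  obtain ⟨A₄, π₄, _, x₁, hx₁⟩ := h₁.exact_up_to_refinements y (by
    rw [← cancel_mono φ.τ₃, assoc, ← φ.comm₂₃, ← reassoc_of% hy]
    simp [hs])
  refine ⟨A₄, π₄ ≫ π₃ ≫ π₂ ≫ π₁, inferInstance, π₄ ≫ π₃ ≫ x + x₁ ≫ φ.τ₁, ?_⟩
  simp only [Preadditive.add_comp, assoc]
  rw [φ.comm₁₂, ← reassoc_of% hx₁, ← hy]
  simp

theorem IsPullback.of_exact_shortComplex' {X₁ X₂ X₃ X₄ : C}
    {fst : X₁ ⟶ X₂} {snd : X₁ ⟶ X₃} {f : X₂ ⟶ X₄} {g : X₃ ⟶ X₄}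
    (sq : CommSq fst snd f g) [Mono sq.shortComplex'.f] (h : sq.shortComplex'.Exact) :
    IsPullback fst snd f g :=
  IsPullback.of_isLimit' sq (sq.isLimitEquivIsLimitKernelFork.symm h.fIsKernel)

end Abelian

end CategoryTheory

theorem middle_square_cartesian_of_extension_general {A : Type*} [Category A] [Abelian A]
    {X' Y' T' Z' X Y T Z X'' Y'' T'' Z'' : A}
    -- the three admissible squares
    (m'₁ : X' ⟶ Y') (m'₂ : T' ⟶ Z') (e'₂ : X' ⟶ T') (e'₁ : Y' ⟶ Z')
    (m₁ : X ⟶ Y) (m₂ : T ⟶ Z) (e₂ : X ⟶ T) (e₁ : Y ⟶ Z)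
    (m''₁ : X'' ⟶ Y'') (m''₂ : T'' ⟶ Z'') (e''₂ : X'' ⟶ T'') (e''₁ : Y'' ⟶ Z'')
    (sq : m₁ ≫ e₁ = e₂ ≫ m₂)
    -- the first and third squares are cartesian
    (hsq' : IsPullback m'₁ e'₂ e'₁ m'₂) (hsq'' : IsPullback m''₁ e''₂ e''₁ m''₂)
    -- the four short exact sequences
    (f : X' ⟶ X) (g : X ⟶ X'') (wX : f ≫ g = 0)
    (hX : (ShortComplex.mk f g wX).ShortExact)
    (f' : Y' ⟶ Y) (g' : Y ⟶ Y'') (wY : f' ≫ g' = 0)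
    (hY : (ShortComplex.mk f' g' wY).ShortExact)
    (f''' : T' ⟶ T) (g''' : T ⟶ T'') (wT : f''' ≫ g''' = 0)
    (hT : (ShortComplex.mk f''' g''' wT).ShortExact)
    (f'' : Z' ⟶ Z) (g'' : Z ⟶ Z'') (wZ : f'' ≫ g'' = 0)
    (hZ : (ShortComplex.mk f'' g'' wZ).ShortExact)
    -- commutativity of the cubic diagram
    (c₁ : m'₁ ≫ f' = f ≫ m₁) (c₂ : e'₂ ≫ f''' = f ≫ e₂)
    (c₃ : e'₁ ≫ f'' = f' ≫ e₁) (c₄ : m'₂ ≫ f'' = f''' ≫ m₂)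
    (c₅ : m₁ ≫ g' = g ≫ m''₁) (c₆ : e₂ ≫ g''' = g ≫ e''₂)
    (c₇ : e₁ ≫ g'' = g' ≫ e''₁) (c₈ : m₂ ≫ g'' = g''' ≫ m''₂) :
    IsPullback m₁ e₂ e₁ m₂ := by
  have hsq : CommSq m₁ e₂ e₁ m₂ := ⟨sq⟩
  let φ := hsq'.toCommSq.shortComplex'Map hsq f f' f''' f'' c₁ c₂ c₃ c₄
  let ψ := hsq.shortComplex'Map hsq''.toCommSq g g' g''' g'' c₅ c₆ c₇ c₈
  have : Epi ψ.τ₁ := hX.epi_g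
  have : Mono φ.τ₂ := by
    have := hY.mono_f
    have := hT.mono_f
    exact biprod.map_mono f' f'''
  have : Mono φ.τ₃ := hZ.mono_f
  have := hsq'.mono_shortComplex'_f
  have := hsq''.mono_shortComplex'_f
  have : Mono hsq.shortComplex'.f := ShortComplex.mono_f_of_outer_rows_mono φ ψ hX.exact
  exact IsPullback.of_exact_shortComplex' hsq
    (ShortComplex.exact_of_outer_rows_exact φ ψ (ShortComplex.exact_biprod_map hY.exact hT.exact)
      hsq'.exact_shortComplex' hsq''.exact_shortComplex')

/-- (Extension of cartesian admissible squares.) In an abelian category, given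
three admissible squares (horizontal arrows `m` monomorphisms, vertical arrows `e` epimorphisms),
of which the first and third are cartesian, and short exact sequences
`X' → X → X''`, `Y' → Y → Y''`, `T' → T → T''`, `Z' → Z → Z''` making the resulting cubic
diagram commute, the middle square is cartesian. -/
theorem middle_square_cartesian_of_extension {A : Type*} [Category A] [Abelian A]
    {X' Y' T' Z' X Y T Z X'' Y'' T'' Z'' : A}
    -- the three admissible squares
    (m'₁ : X' ⟶ Y') (m'₂ : T' ⟶ Z') (e'₂ : X' ⟶ T') (e'₁ : Y' ⟶ Z')
    (m₁ : X ⟶ Y) (m₂ : T ⟶ Z) (e₂ : X ⟶ T) (e₁ : Y ⟶ Z)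
    (m''₁ : X'' ⟶ Y'') (m''₂ : T'' ⟶ Z'') (e''₂ : X'' ⟶ T'') (e''₁ : Y'' ⟶ Z'')
    (_ : Mono m'₁) (_ : Mono m'₂) (_ : Epi e'₂) (_ : Epi e'₁)
    (_ : Mono m₁) (_ : Mono m₂) (_ : Epi e₂) (_ : Epi e₁)
    (_ : Mono m''₁) (_ : Mono m''₂) (_ : Epi e''₂) (_ : Epi e''₁)
    (sq' : m'₁ ≫ e'₁ = e'₂ ≫ m'₂) (sq : m₁ ≫ e₁ = e₂ ≫ m₂)
    (sq'' : m''₁ ≫ e''₁ = e''₂ ≫ m''₂)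
    -- the first and third squares are cartesian
    (hsq' : IsPullback m'₁ e'₂ e'₁ m'₂) (hsq'' : IsPullback m''₁ e''₂ e''₁ m''₂)
    -- the four short exact sequences
    (f : X' ⟶ X) (g : X ⟶ X'') (wX : f ≫ g = 0)
    (hX : (ShortComplex.mk f g wX).ShortExact)
    (f' : Y' ⟶ Y) (g' : Y ⟶ Y'') (wY : f' ≫ g' = 0)
    (hY : (ShortComplex.mk f' g' wY).ShortExact)
    (f''' : T' ⟶ T) (g''' : T ⟶ T'') (wT : f''' ≫ g''' = 0)
    (hT : (ShortComplex.mk f''' g''' wT).ShortExact)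
    (f'' : Z' ⟶ Z) (g'' : Z ⟶ Z'') (wZ : f'' ≫ g'' = 0)
    (hZ : (ShortComplex.mk f'' g'' wZ).ShortExact)
    -- commutativity of the cubic diagram
    (c₁ : m'₁ ≫ f' = f ≫ m₁) (c₂ : e'₂ ≫ f''' = f ≫ e₂)
    (c₃ : e'₁ ≫ f'' = f' ≫ e₁) (c₄ : m'₂ ≫ f'' = f''' ≫ m₂)
    (c₅ : m₁ ≫ g' = g ≫ m''₁) (c₆ : e₂ ≫ g''' = g ≫ e''₂)
    (c₇ : e₁ ≫ g'' = g' ≫ e''₁) (c₈ : m₂ ≫ g'' = g''' ≫ m''₂) :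
    IsPullback m₁ e₂ e₁ m₂ :=
  middle_square_cartesian_of_extension_general m'₁ m'₂ e'₂ e'₁ m₁ m₂ e₂ e₁ m''₁ m''₂ e''₂ e''₁ sq
    hsq' hsq'' f g wX hX f' g' wY hY f''' g''' wT hT f'' g'' wZ hZ c₁ c₂ c₃ c₄ c₅ c₆ c₇ c₈
end
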